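/- arXiv:1907.00357 — 4 statements merged into one kernel-verified Lean document; each statement's English description precedes it below -/
import Mathlib

section
/- In the formal power series ring ℚ[u,v][[z]], let R = ∑_{n≥1} z^{n+1} · ∑_{k=1}^{n} C(n,k)·C(n,k-1)·u^{n+1-k}·v^{k}. Then (1 + 2·R)² · (1 - 2·(u+v)·z + (u-v)²·z²) = (1 - (u+v)·z)². -/
/-!
Let `b n = ∑ₖ C(n,k)² u^(n-k) v^k`, the homogenised Legendre polynomial `(u-v)ⁿ Pₙ((u+v)/(u-v))`,
`B = ∑ b n zⁿ` and `Q = 1 - 2(u+v)z + (u-v)²z²`. Pascal's rule gives `1 + 2R = (1 - (u+v)z) B`,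
so it suffices that `B² Q = 1`. The three-term recurrence
`(n+2) b (n+2) + (n+1)(u-v)² b n = (2n+3)(u+v) b (n+1)` is the differential equation
`Q B' = ((u+v) - (u-v)²z) B`, which makes `(B² Q)' = 0`; since `B² Q` has constant term `1`, it is `1`.
-/

noncomputable section

open MvPolynomial

/-- `ℚ[u,v]`, polynomials in two variables over `ℚ`. -/
abbrev Ruv : Type := MvPolynomial (Fin 2) ℚ

def pu : Ruv := X 0
def pv : Ruv := X 1

open Finset

theorem Nat.mul_choose_succ_sq (n j : ℕ) :
    (n : ℤ) * n.choose (j + 1) ^ 2 = n.choose j * n.choose (j + 1)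
      + n.choose (j + 1) * n.choose (j + 2) + (n + 2) * n.choose j * n.choose (j + 2) := by
  rcases lt_or_ge j n with hj | hj
  · obtain ⟨m, rfl⟩ := Nat.exists_eq_add_of_lt hj
    have h1 : ((j + m + 1).choose (j + 1) : ℤ) * (j + 1) = (j + m + 1).choose j * (m + 1) := by
      have := Nat.choose_succ_right_eq (j + m + 1) j
      rw [show j + m + 1 - j = m + 1 by omega] at this
      exact_mod_cast this
    have h2 : ((j + m + 1).choose (j + 2) : ℤ) * (j + 2) = (j + m + 1).choose (j + 1) * m := by
      have := Nat.choose_succ_right_eq (j + m + 1) (j + 1)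
      rw [show j + m + 1 - (j + 1) = m by omega] at this
      exact_mod_cast this
    refine mul_left_cancel₀ (by positivity : ((m : ℤ) + 1) * (j + 2) ≠ 0) ?_
    push_cast
    set b : ℤ := ((j + m + 1).choose (j + 1) : ℤ)
    set c : ℤ := ((j + m + 1).choose (j + 2) : ℤ)
    linear_combination (b * (j + 2) + (j + m + 3) * c * (j + 2)) * h1
      - (b * (m + 1) + (j + m + 3) * b * (j + 1)) * h2
  · simp [Nat.choose_eq_zero_of_lt (Nat.lt_succ_of_le hj),
      Nat.choose_eq_zero_of_lt (by omega : n < j + 2)]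

section BinaryForm

variable {A : Type*} [CommRing A] (u v : A)

def binaryForm (n : ℕ) (f : ℕ → A) : A := ∑ k ∈ range (n + 1), f k * u ^ (n - k) * v ^ k

variable {u v}

theorem mul_binaryForm_left {n : ℕ} {f : ℕ → A} (hf : f (n + 1) = 0) :
    u * binaryForm u v n f = binaryForm u v (n + 1) f := by
  rw [binaryForm, binaryForm, sum_range_succ _ (n + 1), hf, mul_sum]
  simp only [zero_mul, add_zero]
  refine sum_congr rfl fun k hk => ?_
  rw [show n + 1 - k = n - k + 1 by have := mem_range.1 hk; omega]
  ring

theorem mul_binaryForm_right (n : ℕ) (f : ℕ → A) :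
    v * binaryForm u v n f = binaryForm u v (n + 1) (fun k => if k = 0 then 0 else f (k - 1)) := by
  rw [binaryForm, binaryForm, sum_range_succ' _ (n + 1), mul_sum]
  simp only [Nat.add_sub_add_right, add_tsub_cancel_right, Nat.add_one_ne_zero, if_false,
    if_true, zero_mul, add_zero]
  exact sum_congr rfl fun k _ => by ring

end BinaryForm

section LegendreForm

variable {A : Type*} [CommRing A] (u v : A)

def legendreForm (n : ℕ) : A := binaryForm u v n fun k => (n.choose k : A) ^ 2

theorem legendreForm_zero : legendreForm u v 0 = 1 := by
  simp [legendreForm, binaryForm]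

theorem legendreForm_one : legendreForm u v 1 = u + v := by
  simp [legendreForm, binaryForm, sum_range_succ]

theorem legendreForm_recurrence (n : ℕ) :
    (n + 2 : A) * legendreForm u v (n + 2) + (n + 1 : A) * ((u - v) ^ 2 * legendreForm u v n)
      = (2 * n + 3 : A) * ((u + v) * legendreForm u v (n + 1)) := by
  have hsq : (u - v) ^ 2 * legendreForm u v n = u * (u * legendreForm u v n)
      - 2 * (u * (v * legendreForm u v n)) + v * (v * legendreForm u v n) := by ring
  have hsum : (u + v) * legendreForm u v (n + 1)
      = u * legendreForm u v (n + 1) + v * legendreForm u v (n + 1) := by ring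
  rw [hsq, hsum]
  simp only [legendreForm, mul_binaryForm_right]
  rw [mul_binaryForm_left ?h1, mul_binaryForm_left ?h2, mul_binaryForm_left ?h3,
    mul_binaryForm_left ?h4]
  case h1 | h2 | h3 | h4 => simp [Nat.choose_eq_zero_of_lt]
  rw [← sub_eq_zero]
  simp only [binaryForm, mul_sum, ← sum_add_distrib, ← sum_sub_distrib]
  refine sum_eq_zero fun k _ => ?_
  rcases k with _ | _ | j
  · simp only [Nat.choose_zero_right, tsub_zero, ↓reduceIte]
    ring
  · simp only [zero_add, Nat.choose_one_right, Nat.choose_zero_right, add_tsub_cancel_right,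
      one_ne_zero, ↓reduceIte, tsub_self]
    push_cast
    ring
  -- by Pascal's rule this coefficient is a combination of `C(n,j)`, `C(n,j+1)` and `C(n,j+2)`
  · have key := congrArg (Int.cast : ℤ → A) (Nat.mul_choose_succ_sq n j)
    push_cast at key
    simp only [Nat.choose_succ_succ', Nat.cast_add, Nat.reduceSubDiff, Nat.add_eq_zero_iff,
      one_ne_zero, and_false, and_self, ↓reduceIte, add_tsub_cancel_right]
    linear_combination (-2) * key * u ^ (n - j) * v ^ (j + 2)

theorem legendreForm_succ_sub (n : ℕ) :
    legendreForm u v (n + 1) - (u + v) * legendreForm u v n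
      = 2 * ∑ k ∈ Icc 1 n, (n.choose k : A) * n.choose (k - 1) * u ^ (n + 1 - k) * v ^ k := by
  rw [add_mul, legendreForm, legendreForm, mul_binaryForm_left (by simp), mul_binaryForm_right]
  simp only [binaryForm, ← sum_add_distrib, ← sum_sub_distrib, ← add_mul, ← sub_mul]
  rw [range_eq_Ico, sum_eq_sum_Ico_succ_bot (by omega : 0 < n + 1 + 1), Ico_add_one_right_eq_Icc,
    sum_Icc_succ_top (Nat.le_add_left 1 n), mul_sum]
  simp only [Nat.choose_zero_right, Nat.cast_one, one_pow, ↓reduceIte, add_zero, sub_self,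
    tsub_zero, zero_mul, Nat.choose_self, Nat.choose_succ_self, Nat.cast_zero, ne_eq,
    OfNat.ofNat_ne_zero, not_false_eq_true, zero_pow, Nat.add_eq_zero_iff, one_ne_zero, and_false,
    add_tsub_cancel_right, zero_add]
  refine sum_congr rfl fun k hk => ?_
  obtain ⟨j, rfl⟩ := Nat.exists_eq_add_of_le' (mem_Icc.1 hk).1
  simp only [Nat.choose_succ_succ', Nat.cast_add, Nat.add_eq_zero_iff, one_ne_zero, and_false,
    ↓reduceIte, add_tsub_cancel_right]
  ring

end LegendreForm

namespace PowerSeries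

variable {A : Type*} [CommRing A] (u v : A)

def legendreSeries : A⟦X⟧ := PowerSeries.mk (legendreForm u v)

theorem legendreSeries_ode :
    (1 - 2 * C (u + v) * X + C ((u - v) ^ 2) * X ^ 2) * d⁄dX A (legendreSeries u v)
      = (C (u + v) - C ((u - v) ^ 2) * X) * legendreSeries u v := by
  rw [← map_ofNat (C (R := A)) 2]
  ext n
  simp only [legendreSeries, add_mul, sub_mul, one_mul, mul_assoc, map_add, map_sub,
    coeff_C_mul, coeff_derivative, coeff_mk]
  rcases n with _ | _ | n
  · simp [legendreForm_zero, legendreForm_one]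
  · simp only [Nat.reduceAdd, Nat.cast_one, coeff_succ_X_mul, coeff_derivative, coeff_mk,
      Nat.cast_zero, coeff_X_pow_mul', Nat.not_ofNat_le_one, ↓reduceIte, mul_zero, add_zero]
    linear_combination (norm := (push_cast; ring)) legendreForm_recurrence u v 0
  · simp only [Nat.cast_add, Nat.cast_one, coeff_succ_X_mul, coeff_derivative, coeff_mk,
      coeff_X_pow_mul', le_add_iff_nonneg_left, zero_le, ↓reduceIte, Nat.reduceSubDiff]
    linear_combination (norm := (push_cast; ring)) legendreForm_recurrence u v (n + 1)

theorem legendreSeries_sq_mul [IsAddTorsionFree A] :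
    legendreSeries u v ^ 2 * (1 - 2 * C (u + v) * X + C ((u - v) ^ 2) * X ^ 2) = 1 := by
  refine derivative.ext ?_ ?_
  · have hQ : d⁄dX A (1 - 2 * C (u + v) * X + C ((u - v) ^ 2) * X ^ 2)
        = 2 * C ((u - v) ^ 2) * X - 2 * C (u + v) := by
      have h2 : d⁄dX A (2 : A⟦X⟧) = 0 := by exact_mod_cast (d⁄dX A).map_natCast 2
      simp only [map_add, map_sub, Derivation.map_one_eq_zero, Derivation.leibniz, derivative_X,
        smul_eq_mul, derivative_C, h2, Derivation.leibniz_pow, nsmul_eq_mul]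
      ring
    rw [Derivation.leibniz, derivative_pow, hQ, Derivation.map_one_eq_zero]
    simp only [smul_eq_mul]
    linear_combination (2 * legendreSeries u v) * legendreSeries_ode u v
  · simp [legendreSeries, legendreForm_zero]

theorem one_add_two_mul_series :
    1 + 2 * PowerSeries.mk (fun m => if 2 ≤ m then
        ∑ k ∈ Icc 1 (m - 1), ((m - 1).choose k : A) * (m - 1).choose (k - 1) * u ^ (m - k) * v ^ k
      else 0) = (1 - C (u + v) * X) * legendreSeries u v := by
  rw [← map_ofNat (C (R := A)) 2]
  ext m
  simp only [legendreSeries, sub_mul, one_mul, mul_assoc (C _), map_add (coeff m),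
    map_sub (coeff m), coeff_C_mul, coeff_mk, coeff_one]
  rcases m with _ | _ | n
  · simp [legendreForm_zero]
  · simp [coeff_succ_X_mul, legendreForm_zero, legendreForm_one]
  · rw [coeff_succ_X_mul, coeff_mk, legendreForm_succ_sub]
    simp

theorem sq_one_add_two_mul_series_mul [IsAddTorsionFree A] :
    (1 + 2 * PowerSeries.mk (fun m => if 2 ≤ m then
        ∑ k ∈ Icc 1 (m - 1), ((m - 1).choose k : A) * (m - 1).choose (k - 1) * u ^ (m - k) * v ^ k
      else 0)) ^ 2 * (1 - 2 * C (u + v) * X + C ((u - v) ^ 2) * X ^ 2)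
      = (1 - C (u + v) * X) ^ 2 := by
  rw [one_add_two_mul_series, mul_pow, mul_assoc, legendreSeries_sq_mul, mul_one]

end PowerSeries

/-- With `R = ∑_{n≥1} z^{n+1} ∑_{k=1}^n C(n,k)C(n,k-1) u^{n+1-k} v^k`, one has
`(1+2R)²(1-2(u+v)z+(u-v)²z²) = (1-(u+v)z)²`. -/
theorem a132812_generating_series :
    (1 + 2 * PowerSeries.mk (fun m => if 2 ≤ m then
          ∑ k ∈ Finset.Icc 1 (m - 1),
            MvPolynomial.C ((((m - 1).choose k : ℚ)) * (((m - 1).choose (k - 1) : ℚ)))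
              * pu ^ (m - k) * pv ^ k
        else 0)) ^ 2
      * (1 - 2 * PowerSeries.C (R := Ruv) (pu + pv) * PowerSeries.X
          + PowerSeries.C (R := Ruv) ((pu - pv) ^ 2) * PowerSeries.X ^ 2)
      = (1 - PowerSeries.C (R := Ruv) (pu + pv) * PowerSeries.X) ^ 2 := by
  simp only [map_mul, map_natCast]
  exact PowerSeries.sq_one_add_two_mul_series_mul pu pv

end
end

section
/- In the formal power series ring ℚ[u,v][[z]], let P = ∑_{n≥0} z^{n} · ∑_{k=0}^{n} C(n,k)²·u^{n-k}·v^{k}. Then P² · (1 - 2·(u+v)·z + (u-v)²·z²) = 1. -/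
noncomputable section

open MvPolynomial

namespace CDaux

lemma core (n j : ℕ) :
    (n : ℚ) * (n.choose (j+1) : ℚ)^2 =
      (n.choose j : ℚ) * (n.choose (j+1)) + (n.choose (j+1) : ℚ) * (n.choose (j+2))
      + ((n:ℚ)+2) * (n.choose j) * (n.choose (j+2)) := by
  rcases le_or_gt n j with h | h
  · have h1 : n.choose (j+1) = 0 := Nat.choose_eq_zero_of_lt (by omega)
    have h2 : n.choose (j+2) = 0 := Nat.choose_eq_zero_of_lt (by omega)
    simp [h1, h2]
  · have r1 := Nat.choose_succ_right_eq n j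
    have r2 := Nat.choose_succ_right_eq n (j+1)
    have hx : (j:ℚ) < n := by exact_mod_cast h
    have hx0 : (n:ℚ) - j ≠ 0 := by linarith
    have hj2 : ((j:ℚ)+2) ≠ 0 := by positivity
    have q1 : (n.choose (j+1) : ℚ) * (j+1) = (n.choose j : ℚ) * ((n:ℚ) - j) := by
      have := congrArg (Nat.cast : ℕ → ℚ) r1
      push_cast [Nat.cast_sub h.le] at this
      linarith [this]
    have q2 : (n.choose (j+2) : ℚ) * (j+2) = (n.choose (j+1) : ℚ) * ((n:ℚ) - j - 1) := by
      have := congrArg (Nat.cast : ℕ → ℚ) r2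
      have hle : j + 1 ≤ n := h
      push_cast [Nat.cast_sub hle] at this
      linarith [this]
    have ha : (n.choose j : ℚ) = (n.choose (j+1) : ℚ) * (j+1) / ((n:ℚ) - j) := by
      rw [eq_div_iff hx0]; linarith [q1]
    have hc : (n.choose (j+2) : ℚ) = (n.choose (j+1) : ℚ) * ((n:ℚ) - j - 1) / ((j:ℚ)+2) := by
      rw [eq_div_iff hj2]; push_cast at q2 ⊢; linarith [q2]
    rw [ha, hc]
    field_simp
    ring

lemma qkey0 (n : ℕ) : ((n:ℚ)+2) * ((n+2).choose 0 : ℚ)^2 =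
    (2*(n:ℚ)+3) * ((n+1).choose 0 : ℚ)^2 - ((n:ℚ)+1) * (n.choose 0 : ℚ)^2 := by
  simp; ring

lemma qkey1 (n : ℕ) : ((n:ℚ)+2) * ((n+2).choose 1 : ℚ)^2 =
    (2*(n:ℚ)+3) * (((n+1).choose 1 : ℚ)^2 + ((n+1).choose 0 : ℚ)^2)
    - ((n:ℚ)+1) * ((n.choose 1 : ℚ)^2 - 2*(n.choose 0 : ℚ)^2) := by
  simp [Nat.choose_one_right]
  push_cast
  ring

lemma qkey2 (n j : ℕ) : ((n:ℚ)+2) * ((n+2).choose (j+2) : ℚ)^2 =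
    (2*(n:ℚ)+3) * (((n+1).choose (j+2) : ℚ)^2 + ((n+1).choose (j+1) : ℚ)^2)
    - ((n:ℚ)+1) * ((n.choose (j+2) : ℚ)^2 - 2*(n.choose (j+1) : ℚ)^2 + (n.choose j : ℚ)^2) := by
  have c1 : (((n+2)).choose (j+2) : ℚ)
      = (n.choose j : ℚ) + 2*(n.choose (j+1) : ℚ) + (n.choose (j+2) : ℚ) := by
    rw [Nat.choose_succ_succ (n+1) (j+1), Nat.choose_succ_succ n j, Nat.choose_succ_succ n (j+1)]
    push_cast; ring
  have c2 : (((n+1)).choose (j+2) : ℚ) = (n.choose (j+1) : ℚ) + (n.choose (j+2) : ℚ) := by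
    rw [Nat.choose_succ_succ n (j+1)]; push_cast; ring
  have c3 : (((n+1)).choose (j+1) : ℚ) = (n.choose j : ℚ) + (n.choose (j+1) : ℚ) := by
    rw [Nat.choose_succ_succ n j]; push_cast; ring
  rw [c1, c2, c3]
  linear_combination (-2) * core n j

/-- the coefficient polynomials -/
def aP (n : ℕ) : Ruv :=
  ∑ k ∈ Finset.range (n + 1), MvPolynomial.C ((n.choose k : ℚ) ^ 2) * pu ^ (n - k) * pv ^ k

lemma aP_zero : aP 0 = 1 := by
  simp [aP]

lemma aP_one : aP 1 = (pu + pv) * aP 0 := by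
  simp [aP, Finset.sum_range_succ]
  try ring

lemma h1 (n : ℕ) : MvPolynomial.C (2*(n:ℚ)+3) * (pu * aP (n+1))
    = ∑ k ∈ Finset.range (n+3),
        MvPolynomial.C ((2*(n:ℚ)+3) * (((n+1).choose k : ℚ))^2) * pu^(n+2-k) * pv^k := by
  rw [show n+3 = (n+2)+1 from rfl, Finset.sum_range_succ,
    Nat.choose_eq_zero_of_lt (by omega : n+1 < n+2)]
  rw [aP, show n+1+1 = n+2 from rfl, Finset.mul_sum, Finset.mul_sum]
  simp only [Nat.cast_zero, ne_eq, OfNat.ofNat_ne_zero, not_false_eq_true, zero_pow, mul_zero,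
    map_zero, zero_mul, add_zero]
  refine Finset.sum_congr rfl fun k hk => ?_
  simp only [Finset.mem_range] at hk
  rw [show n+2-k = (n+1-k)+1 by omega, pow_succ]
  simp only [map_mul, map_add, map_pow, map_natCast, map_ofNat, map_one]
  ring

lemma h2 (n : ℕ) : MvPolynomial.C (2*(n:ℚ)+3) * (pv * aP (n+1))
    = ∑ k ∈ Finset.range (n+3), (if k = 0 then 0 else
        MvPolynomial.C ((2*(n:ℚ)+3) * (((n+1).choose (k-1) : ℚ))^2) * pu^(n+2-k) * pv^k) := by
  rw [show n+3 = (n+2)+1 from rfl,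
    Finset.sum_range_succ' (fun k => if k = 0 then (0:Ruv) else
      MvPolynomial.C ((2*(n:ℚ)+3) * (((n+1).choose (k-1) : ℚ))^2) * pu^(n+2-k) * pv^k) (n+2)]
  simp only [Nat.succ_ne_zero, if_false, eq_self_iff_true, if_true, add_zero, Nat.add_sub_cancel]
  rw [aP, show n+1+1 = n+2 from rfl, Finset.mul_sum, Finset.mul_sum]
  refine Finset.sum_congr rfl fun k hk => ?_
  simp only [Finset.mem_range] at hk
  rw [show n+2-(k+1) = (n+1-k) by omega]
  simp only [map_mul, map_add, map_pow, map_natCast, map_ofNat, map_one]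
  ring

lemma h3 (n : ℕ) : MvPolynomial.C ((n:ℚ)+1) * (pu^2 * aP n)
    = ∑ k ∈ Finset.range (n+3),
        MvPolynomial.C (((n:ℚ)+1) * ((n.choose k : ℚ))^2) * pu^(n+2-k) * pv^k := by
  rw [show n+3 = (n+2)+1 from rfl, Finset.sum_range_succ,
    Nat.choose_eq_zero_of_lt (by omega : n < n+2)]
  rw [show n+2 = (n+1)+1 from rfl, Finset.sum_range_succ,
    Nat.choose_eq_zero_of_lt (by omega : n < n+1)]
  rw [aP, Finset.mul_sum, Finset.mul_sum]
  simp only [Nat.cast_zero, ne_eq, OfNat.ofNat_ne_zero, not_false_eq_true, zero_pow, mul_zero,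
    map_zero, zero_mul, add_zero]
  refine Finset.sum_congr rfl fun k hk => ?_
  simp only [Finset.mem_range] at hk
  rw [show n+1+1-k = (n-k)+2 by omega]
  simp only [map_mul, map_add, map_pow, map_natCast, map_ofNat, map_one]
  ring

lemma h4 (n : ℕ) : MvPolynomial.C (2*((n:ℚ)+1)) * (pu * pv * aP n)
    = ∑ k ∈ Finset.range (n+3), (if k = 0 then 0 else
        MvPolynomial.C (2*((n:ℚ)+1) * ((n.choose (k-1) : ℚ))^2) * pu^(n+2-k) * pv^k) := by
  rw [show n+3 = (n+2)+1 from rfl,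
    Finset.sum_range_succ' (fun k => if k = 0 then (0:Ruv) else
      MvPolynomial.C (2*((n:ℚ)+1) * ((n.choose (k-1) : ℚ))^2) * pu^(n+2-k) * pv^k) (n+2)]
  simp only [Nat.succ_ne_zero, if_false, eq_self_iff_true, if_true, add_zero, Nat.add_sub_cancel]
  rw [show n+2 = (n+1)+1 from rfl, Finset.sum_range_succ,
    Nat.choose_eq_zero_of_lt (by omega : n < n+1)]
  rw [aP, Finset.mul_sum, Finset.mul_sum]
  simp only [Nat.cast_zero, ne_eq, OfNat.ofNat_ne_zero, not_false_eq_true, zero_pow, mul_zero,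
    map_zero, zero_mul, add_zero]
  refine Finset.sum_congr rfl fun k hk => ?_
  simp only [Finset.mem_range] at hk
  rw [show n+1+1-(k+1) = (n-k)+1 by omega, pow_succ]
  simp only [map_mul, map_add, map_pow, map_natCast, map_ofNat, map_one]
  ring

lemma h5 (n : ℕ) : MvPolynomial.C ((n:ℚ)+1) * (pv^2 * aP n)
    = ∑ k ∈ Finset.range (n+3), (if k ≤ 1 then 0 else
        MvPolynomial.C (((n:ℚ)+1) * ((n.choose (k-2) : ℚ))^2) * pu^(n+2-k) * pv^k) := by
  rw [show n+3 = (n+2)+1 from rfl,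
    Finset.sum_range_succ' (fun k => if k ≤ 1 then (0:Ruv) else
      MvPolynomial.C (((n:ℚ)+1) * ((n.choose (k-2) : ℚ))^2) * pu^(n+2-k) * pv^k) (n+2)]
  rw [show n+2 = (n+1)+1 from rfl,
    Finset.sum_range_succ' (fun k => if k+1 ≤ 1 then (0:Ruv) else
      MvPolynomial.C (((n:ℚ)+1) * ((n.choose (k+1-2) : ℚ))^2) * pu^(n+2-(k+1)) * pv^(k+1)) (n+1)]
  norm_num
  rw [aP, Finset.mul_sum, Finset.mul_sum]
  refine Finset.sum_congr rfl fun k hk => ?_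
  simp only [Finset.mem_range] at hk
  rw [show n+2-(k+1+1) = n-k by omega, show k+1+1-2 = k from rfl]
  simp only [map_mul, map_add, map_pow, map_natCast, map_ofNat, map_one]
  ring

lemma rec2 (n : ℕ) :
    MvPolynomial.C ((n:ℚ)+2) * aP (n+2)
      = MvPolynomial.C (2*(n:ℚ)+3) * ((pu+pv) * aP (n+1))
        - MvPolynomial.C ((n:ℚ)+1) * ((pu-pv)^2 * aP n) := by
  have expand : MvPolynomial.C (2*(n:ℚ)+3) * ((pu+pv) * aP (n+1))
      - MvPolynomial.C ((n:ℚ)+1) * ((pu-pv)^2 * aP n)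
      = MvPolynomial.C (2*(n:ℚ)+3) * (pu * aP (n+1))
        + MvPolynomial.C (2*(n:ℚ)+3) * (pv * aP (n+1))
        - (MvPolynomial.C ((n:ℚ)+1) * (pu^2 * aP n)
          - MvPolynomial.C (2*((n:ℚ)+1)) * (pu * pv * aP n)
          + MvPolynomial.C ((n:ℚ)+1) * (pv^2 * aP n)) := by
    rw [show MvPolynomial.C (2*((n:ℚ)+1)) = (2 : Ruv) * MvPolynomial.C ((n:ℚ)+1) by
      rw [map_mul, map_ofNat]]
    ring
  have hL : MvPolynomial.C ((n:ℚ)+2) * aP (n+2)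
      = ∑ k ∈ Finset.range (n+3),
          MvPolynomial.C (((n:ℚ)+2) * (((n+2).choose k : ℚ))^2) * pu^(n+2-k) * pv^k := by
    rw [aP, show n+2+1 = n+3 from rfl, Finset.mul_sum]
    refine Finset.sum_congr rfl fun k hk => ?_
    simp only [map_mul, map_add, map_pow, map_natCast, map_ofNat, map_one]
    ring
  rw [expand, hL, h1, h2, h3, h4, h5]
  rw [← Finset.sum_sub_distrib, ← Finset.sum_add_distrib, ← Finset.sum_add_distrib,
    ← Finset.sum_sub_distrib]
  refine Finset.sum_congr rfl fun k hk => ?_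
  simp only [Finset.mem_range] at hk
  match k with
  | 0 =>
    have e' := congrArg (fun q => (MvPolynomial.C q : Ruv)) (qkey0 n)
    simp only [map_mul, map_add, map_sub, map_pow, map_natCast, map_ofNat, map_one] at e'
    simp only [eq_self_iff_true, if_true, Nat.zero_le, Nat.le_refl]
    simp only [map_mul, map_add, map_pow, map_natCast, map_ofNat, map_one]
    linear_combination (pu ^ (n+2-0) * pv ^ (0:ℕ)) * e'
  | 1 =>
    have e' := congrArg (fun q => (MvPolynomial.C q : Ruv)) (qkey1 n)
    simp only [map_mul, map_add, map_sub, map_pow, map_natCast, map_ofNat, map_one] at e'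
    have t1 : (1:ℕ) ≠ 0 := one_ne_zero
    simp only [if_neg t1, Nat.le_refl, if_true, eq_self_iff_true, le_refl,
      show (1:ℕ)-1 = 0 from rfl]
    simp only [map_mul, map_add, map_pow, map_natCast, map_ofNat, map_one]
    linear_combination (pu ^ (n+2-1) * pv ^ (1:ℕ)) * e'
  | (j+2) =>
    have e' := congrArg (fun q => (MvPolynomial.C q : Ruv)) (qkey2 n j)
    simp only [map_mul, map_add, map_sub, map_pow, map_natCast, map_ofNat, map_one] at e'
    have t1 : (j+2:ℕ) ≠ 0 := by omega
    have t2 : ¬((j+2:ℕ) ≤ 1) := by omega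
    simp only [if_neg t1, if_neg t2, show j+2-1 = j+1 from rfl, show j+2-2 = j from rfl]
    simp only [map_mul, map_add, map_pow, map_natCast, map_ofNat, map_one]
    linear_combination (pu ^ (n+2-(j+2)) * pv ^ (j+2)) * e'

lemma rec2' (n : ℕ) :
    ((n:Ruv)+2) * aP (n+2)
      = (2*(n:Ruv)+3) * ((pu+pv) * aP (n+1)) - ((n:Ruv)+1) * ((pu-pv)^2 * aP n) := by
  have h := rec2 n
  simpa only [map_mul, map_add, map_natCast, map_ofNat, map_one] using h

noncomputable def Ps : PowerSeries Ruv := PowerSeries.mk aP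
noncomputable def Qs : PowerSeries Ruv :=
  1 - 2 * PowerSeries.C (R := Ruv) (pu + pv) * PowerSeries.X
    + PowerSeries.C (R := Ruv) ((pu - pv) ^ 2) * PowerSeries.X ^ 2
noncomputable def Ss : PowerSeries Ruv :=
  PowerSeries.C (R := Ruv) (pu + pv) - PowerSeries.C (R := Ruv) ((pu - pv) ^ 2) * PowerSeries.X

lemma ode : Qs * (PowerSeries.derivative Ruv Ps) = Ss * Ps := by
  set c1 : Ruv := pu + pv with hc1
  set c2 : Ruv := (pu - pv)^2 with hc2
  have hQ : Qs * (PowerSeries.derivative Ruv Ps)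
      = PowerSeries.derivative Ruv Ps
        - 2 * (PowerSeries.C (R := Ruv) c1 * (PowerSeries.X * PowerSeries.derivative Ruv Ps))
        + PowerSeries.C (R := Ruv) c2
            * (PowerSeries.X * (PowerSeries.X * PowerSeries.derivative Ruv Ps)) := by
    rw [Qs]; ring
  have hS : Ss * Ps = PowerSeries.C (R := Ruv) c1 * Ps
      - PowerSeries.C (R := Ruv) c2 * (PowerSeries.X * Ps) := by
    rw [Ss]; ring
  rw [hQ, hS]
  refine PowerSeries.ext fun n => ?_
  match n with
  | 0 =>
    simp only [map_add, map_sub, two_mul, PowerSeries.coeff_C_mul,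
      PowerSeries.coeff_zero_X_mul, PowerSeries.coeff_derivative, PowerSeries.coeff_mk, Ps]
    rw [hc1, hc2]
    simp [aP_one]
  | 1 =>
    simp only [map_add, map_sub, two_mul, PowerSeries.coeff_C_mul,
      PowerSeries.coeff_succ_X_mul, PowerSeries.coeff_zero_X_mul,
      PowerSeries.coeff_derivative, PowerSeries.coeff_mk, Ps]
    rw [hc1, hc2]
    have h := rec2' 0
    push_cast at h ⊢
    linear_combination h
  | (m+2) =>
    simp only [map_add, map_sub, two_mul, PowerSeries.coeff_C_mul,
      PowerSeries.coeff_succ_X_mul, PowerSeries.coeff_derivative, PowerSeries.coeff_mk, Ps]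
    rw [hc1, hc2]
    have h := rec2' (m+1)
    push_cast at h ⊢
    linear_combination h

lemma dQ : PowerSeries.derivative Ruv Qs = -2 * Ss := by
  set c1 : Ruv := pu + pv with hc1
  set c2 : Ruv := (pu - pv)^2 with hc2
  rw [Qs, Ss]
  rw [map_add, Derivation.map_sub, Derivation.map_one_eq_zero,
    Derivation.leibniz, Derivation.leibniz, Derivation.leibniz, Derivation.leibniz_pow]
  simp only [PowerSeries.derivative_X, PowerSeries.derivative_C, smul_eq_mul, nsmul_eq_mul,
    Nat.cast_ofNat, pow_one, mul_one, mul_zero, zero_sub, add_zero, zero_add, smul_zero,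
    Derivation.leibniz]
  rw [show ((2:PowerSeries Ruv)) = PowerSeries.C (R := Ruv) 2 from (map_ofNat (PowerSeries.C (R := Ruv)) 2).symm,
    PowerSeries.derivative_C, show (2-1 : ℕ) = 1 from rfl, pow_one]
  ring

lemma mainPS : Ps ^ 2 * Qs = 1 := by
  have hconst : PowerSeries.constantCoeff (R := Ruv) (Ps ^ 2 * Qs)
      = PowerSeries.constantCoeff (R := Ruv) (1 : PowerSeries Ruv) := by
    simp [Ps, Qs, PowerSeries.constantCoeff_mk, aP_zero]
  have hD : PowerSeries.derivative Ruv (Ps ^ 2 * Qs)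
      = PowerSeries.derivative Ruv (1 : PowerSeries Ruv) := by
    rw [Derivation.map_one_eq_zero, Derivation.leibniz, Derivation.leibniz_pow, dQ]
    simp only [smul_eq_mul, nsmul_eq_mul, Nat.cast_ofNat, pow_one]
    linear_combination 2 * Ps * ode
  exact PowerSeries.derivative.ext hD hconst

end CDaux

/-- With `P = ∑_{n≥0} z^n ∑_{k=0}^n C(n,k)² u^{n-k} v^k`, one has
`P²(1-2(u+v)z+(u-v)²z²) = 1`. -/
theorem central_delannoy_type_generating_series :
    (PowerSeries.mk (fun n =>
        ∑ k ∈ Finset.range (n + 1),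
          MvPolynomial.C ((n.choose k : ℚ) ^ 2) * pu ^ (n - k) * pv ^ k)) ^ 2
      * (1 - 2 * PowerSeries.C (R := Ruv) (pu + pv) * PowerSeries.X
          + PowerSeries.C (R := Ruv) ((pu - pv) ^ 2) * PowerSeries.X ^ 2)
      = 1 := CDaux.mainPS

end
end

section
/- Let K = ℚ(s,u,v) and work in K[[ξ]]. Let G(ξ) = ∑_{n≥1} sⁿ·ξ^{n+1} · ∑_{k=1}^{n} N_{n,k}·u^{n+1-k}·v^{k}, where N_{n,k} = (1/n)·C(n,k)·C(n,k-1) are the Narayana numbers, and set y = -1/(2s) + (u+v)·ξ/2 + G(ξ). Then y² = 1/(4s²) - (u+v)·ξ/(2s) + (u-v)²·ξ²/4. (This is the dessin spectral curve y² = 1/(4s²) - (u+v)/(2sx) + (u-v)²/(4x²) written in the variable ξ = 1/x.) -/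
noncomputable section

/-- The field `ℚ(s,u,v)` of rational functions in three indeterminates over `ℚ`. -/
abbrev DessinField : Type := FractionRing (MvPolynomial (Fin 3) ℚ)

def ds : DessinField := algebraMap (MvPolynomial (Fin 3) ℚ) DessinField (MvPolynomial.X 0)
def du : DessinField := algebraMap (MvPolynomial (Fin 3) ℚ) DessinField (MvPolynomial.X 1)
def dv : DessinField := algebraMap (MvPolynomial (Fin 3) ℚ) DessinField (MvPolynomial.X 2)

/-- The genus-zero one-point function of dessins, `G(ξ) = ∑_{n≥1} sⁿ ξ^{n+1}
∑_{k=1}^n N_{n,k} u^{n+1-k} v^k`. -/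
def dessinG01 : PowerSeries DessinField :=
  PowerSeries.mk fun m => if 2 ≤ m then
    ds ^ (m - 1) * ∑ k ∈ Finset.Icc 1 (m - 1),
      ((((m - 1 : ℕ) : DessinField))⁻¹ * ((m - 1).choose k : DessinField)
        * ((m - 1).choose (k - 1) : DessinField)) * du ^ (m - k) * dv ^ k
  else 0

/-!
Writing `G = ξ h`, the claim is, after completing the square, the quadratic equation
`G = s (G + uξ)(G + vξ)`, i.e. `h = ξ φ(h)` with `φ(w) = s (w + u)(w + v)`. By Lagrange inversion
`[ξⁿ] h = n⁻¹ [wⁿ⁻¹] φⁿ = sⁿ n⁻¹ ∑ₖ C(n,k) C(n,k-1) u^{n+1-k} vᵏ`, which are the Narayana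
coefficients of `G`.

Lagrange inversion for a polynomial `φ` is proved without constructing the solution first: the
Lagrange–Bürmann formula defines a linear map `L : p ↦ p(h)` directly. An identity for the Euler
operator `w d/dw` gives `L (w q) = ξ L (q φ)`, from which `L (w q) = L w · L q` follows by induction
on the `ξ`-adic order, so `L` is evaluation at `L w`, and `L w = ξ L φ = ξ φ(L w)`.
-/

open Polynomial
open scoped PowerSeries

theorem Finset.sum_Icc_one_eq_sum_range {M : Type*} [AddCommMonoid M] (f : ℕ → M) (n : ℕ) :
    ∑ k ∈ Finset.Icc 1 n, f k = ∑ i ∈ Finset.range n, f (i + 1) := by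
  rw [Finset.range_eq_Ico, Finset.sum_Ico_add' f 0 n 1, zero_add, Finset.Ico_add_one_right_eq_Icc]

namespace Polynomial

theorem coeff_X_mul_derivative {R : Type*} [Semiring R] (p : R[X]) (n : ℕ) :
    (X * derivative p).coeff n = n * p.coeff n := by
  cases n with
  | zero => simp
  | succ n => rw [coeff_X_mul, coeff_derivative, ← Nat.cast_succ, Nat.cast_comm]

theorem coeff_X_add_C_pow_succ_mul_X_add_C_pow_succ {R : Type*} [CommSemiring R] (u v : R)
    (n : ℕ) : ((X + C u) ^ (n + 1) * (X + C v) ^ (n + 1)).coeff n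
      = ∑ k ∈ Finset.Icc 1 (n + 1),
          ((n + 1).choose k * (n + 1).choose (k - 1) : R) * u ^ (n + 2 - k) * v ^ k := by
  rw [coeff_mul, Finset.Nat.sum_antidiagonal_eq_sum_range_succ_mk, Finset.sum_Icc_one_eq_sum_range]
  refine Finset.sum_congr rfl fun i hi => ?_
  have hi : i ≤ n := Nat.lt_succ_iff.mp (Finset.mem_range.mp hi)
  simp only [coeff_X_add_C_pow, Nat.add_sub_cancel]
  rw [show n + 1 - (n - i) = i + 1 by omega, show n + 2 - (i + 1) = n + 1 - i by omega,
    Nat.choose_symm_of_eq_add (by omega : n + 1 = (n - i) + (i + 1))]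
  ring

end Polynomial

section LagrangeInversion

variable {K : Type*} [Field K] [CharZero K] (φ : K[X])

/-- The would-be evaluation `p ↦ p(h)` at the solution of `h = X φ(h)`, given by the
Lagrange–Bürmann formula `[Xⁿ] p(h) = n⁻¹ [wⁿ] (w p'(w) φ(w)ⁿ)` for `n ≥ 1`. -/
def lagrangeMap : K[X] →ₗ[K] K⟦X⟧ where
  toFun p := PowerSeries.C (p.coeff 0) +
    PowerSeries.mk fun n => (n : K)⁻¹ * (X * derivative p * φ ^ n).coeff n
  map_add' p q := by
    ext n
    simp only [coeff_add, map_add, mul_add, add_mul, PowerSeries.coeff_mk]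
    ring
  map_smul' a p := by
    ext n
    simp only [coeff_smul, smul_eq_mul, map_smul, smul_add, map_add, RingHom.id_apply,
      Algebra.mul_smul_comm, Algebra.smul_mul_assoc, PowerSeries.coeff_mk, PowerSeries.coeff_C]
    split_ifs <;> ring

theorem coeff_zero_lagrangeMap (p : K[X]) : PowerSeries.coeff 0 (lagrangeMap φ p) = p.coeff 0 := by
  simp [lagrangeMap]

theorem coeff_lagrangeMap {n : ℕ} (hn : n ≠ 0) (p : K[X]) :
    PowerSeries.coeff n (lagrangeMap φ p) = (n : K)⁻¹ * (X * derivative p * φ ^ n).coeff n := by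
  simp [lagrangeMap, PowerSeries.coeff_C, hn]

theorem coeff_succ_lagrangeMap_X (n : ℕ) :
    PowerSeries.coeff (n + 1) (lagrangeMap φ X) = ((n : K) + 1)⁻¹ * (φ ^ (n + 1)).coeff n := by
  rw [coeff_lagrangeMap φ n.succ_ne_zero, derivative_X, mul_one, coeff_X_mul, Nat.cast_succ]

theorem lagrangeMap_one : lagrangeMap φ 1 = 1 := by
  ext n
  rcases eq_or_ne n 0 with rfl | hn
  · simp [coeff_zero_lagrangeMap]
  · simp [coeff_lagrangeMap φ hn, hn]

theorem lagrangeMap_C (a : K) : lagrangeMap φ (C a) = PowerSeries.C a := by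
  rw [← mul_one (C a), C_mul', map_smul, lagrangeMap_one, PowerSeries.smul_eq_C_mul, mul_one]

theorem lagrangeMap_X_mul (q : K[X]) :
    lagrangeMap φ (X * q) = PowerSeries.X * lagrangeMap φ (q * φ) := by
  ext n
  rcases n with _ | n
  · simp [coeff_zero_lagrangeMap]
  rw [PowerSeries.coeff_succ_X_mul, coeff_lagrangeMap φ n.succ_ne_zero]
  rcases eq_or_ne n 0 with rfl | hn
  · simp [coeff_zero_lagrangeMap, mul_assoc, coeff_X_mul, mul_coeff_zero]
  rw [coeff_lagrangeMap φ hn]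
  have euler : C ((n : K) + 1) * (X * derivative (q * φ) * φ ^ n)
      = C (n : K) * (X * derivative q * φ ^ (n + 1)) + X * derivative (q * φ ^ (n + 1)) := by
    simp only [derivative_mul, derivative_pow, Nat.add_sub_cancel, map_add, map_one, map_natCast]
    push_cast
    ring
  replace euler := congrArg (coeff · n) euler
  simp only [coeff_add, coeff_C_mul, coeff_X_mul_derivative] at euler
  have hX : X * derivative (X * q) * φ ^ (n + 1)
      = X * (q * φ ^ (n + 1) + X * derivative q * φ ^ (n + 1)) := by
    rw [derivative_mul, derivative_X, one_mul]
    ring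
  rw [hX, coeff_X_mul, coeff_add]
  push_cast
  field_simp
  rw [euler]
  ring

theorem lagrangeMap_X_mul_eq_mul (q : K[X]) :
    lagrangeMap φ (X * q) = lagrangeMap φ X * lagrangeMap φ q := by
  set L := lagrangeMap φ
  have defect (p : K[X]) : L X * L p - L (X * p)
      = PowerSeries.X * (L X * L (p.divX * φ) - L (X * (p.divX * φ))) := by
    conv_lhs => rw [← X_mul_divX_add p]
    rw [mul_add, map_add, map_add, lagrangeMap_C, mul_comm X (C _), C_mul', map_smul,
      lagrangeMap_X_mul φ (X * p.divX), mul_assoc X, lagrangeMap_X_mul φ p.divX,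
      PowerSeries.smul_eq_C_mul]
    ring
  have vanish (N : ℕ) : ∀ p, PowerSeries.coeff N (L X * L p - L (X * p)) = 0 := by
    induction N with
    | zero => intro p; rw [defect, PowerSeries.coeff_zero_X_mul]
    | succ N ih => intro p; rw [defect, PowerSeries.coeff_succ_X_mul, ih]
  exact (sub_eq_zero.mp (PowerSeries.ext fun N => by simpa using vanish N q)).symm

theorem lagrangeMap_eq_aeval (p : K[X]) : lagrangeMap φ p = aeval (lagrangeMap φ X) p := by
  induction p using Polynomial.induction_on with
  | C a => rw [lagrangeMap_C, aeval_C]; rfl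
  | add p q hp hq => rw [map_add, map_add, hp, hq]
  | monomial n a ih =>
    rw [pow_succ', mul_left_comm, lagrangeMap_X_mul_eq_mul, ih, map_mul, map_mul, aeval_X, map_mul]

theorem lagrangeMap_X_eq_X_mul_aeval :
    lagrangeMap φ X = PowerSeries.X * aeval (lagrangeMap φ X) φ := by
  have h := lagrangeMap_X_mul φ 1
  rwa [mul_one, one_mul, lagrangeMap_eq_aeval φ φ] at h

end LagrangeInversion

theorem sq_eq_of_eq_mul_add_mul_add {A : Type*} [CommRing A] {S U V W x G : A}
    (hW : 2 * S * W = 1) (hG : G = S * (G + U * x) * (G + V * x)) :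
    (-W + (U + V) * S * W * x + G) ^ 2
      = W ^ 2 - (U + V) * W * x + (U - V) ^ 2 * S ^ 2 * W ^ 2 * x ^ 2 := by
  linear_combination (-2 * W) * hG
    + (U * V * x ^ 2 * (1 + 2 * S * W) - (U + V) * W * x + (U + V) * x * G
      - (G + U * x) * (G + V * x)) * hW

theorem dessinG01_eq_X_mul_lagrangeMap :
    dessinG01 = PowerSeries.X * lagrangeMap (C ds * (X + C du) * (X + C dv)) X := by
  ext m
  rcases m with _ | _ | n
  · simp [dessinG01]
  · simp [dessinG01, coeff_zero_lagrangeMap]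
  rw [PowerSeries.coeff_succ_X_mul, coeff_succ_lagrangeMap_X, mul_pow, mul_pow, ← C_pow, mul_assoc,
    coeff_C_mul, coeff_X_add_C_pow_succ_mul_X_add_C_pow_succ]
  simp only [dessinG01, PowerSeries.coeff_mk, le_add_iff_nonneg_left, zero_le, if_true,
    Nat.add_sub_cancel, Finset.mul_sum]
  refine Finset.sum_congr rfl fun k _ => ?_
  push_cast
  ring

theorem dessinG01_eq_mul_add_mul_add :
    dessinG01 = PowerSeries.C ds * (dessinG01 + PowerSeries.C du * PowerSeries.X)
      * (dessinG01 + PowerSeries.C dv * PowerSeries.X) := by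
  have hg := lagrangeMap_X_eq_X_mul_aeval (C ds * (X + C du) * (X + C dv))
  simp only [map_mul, map_add, aeval_C, aeval_X, PowerSeries.algebraMap_apply,
    Algebra.algebraMap_self, RingHom.id_apply] at hg
  rw [dessinG01_eq_X_mul_lagrangeMap]
  linear_combination PowerSeries.X * hg

theorem ds_ne_zero : ds ≠ 0 :=
  (map_ne_zero_iff _ (IsFractionRing.injective (MvPolynomial (Fin 3) ℚ) DessinField)).mpr
    (MvPolynomial.X_ne_zero 0)

/-- `y = -1/(2s) + (u+v)ξ/2 + G(ξ)` satisfies the dessin spectral curve equation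
`y² = 1/(4s²) - (u+v)ξ/(2s) + (u-v)²ξ²/4` (in the variable `ξ = 1/x`). -/
theorem dessin_spectral_curve_from_one_point_function :
    (PowerSeries.C (R := DessinField) (-(2 * ds)⁻¹)
        + PowerSeries.C (R := DessinField) ((du + dv) / 2) * PowerSeries.X
        + dessinG01) ^ 2
      = PowerSeries.C (R := DessinField) (1 / (4 * ds ^ 2))
        - PowerSeries.C (R := DessinField) ((du + dv) / (2 * ds)) * PowerSeries.X
        + PowerSeries.C (R := DessinField) ((du - dv) ^ 2 / 4) * PowerSeries.X ^ 2 := by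
  have hs := ds_ne_zero
  have hw : 2 * ds * (2 * ds)⁻¹ = 1 := mul_inv_cancel₀ (by simp [hs])
  have hsum : (du + dv) / 2 = (du + dv) * ds * (2 * ds)⁻¹ := by field_simp
  have hconst : 1 / (4 * ds ^ 2) = (2 * ds)⁻¹ ^ 2 := by field_simp; ring
  have hdiff : (du - dv) ^ 2 / 4 = (du - dv) ^ 2 * ds ^ 2 * (2 * ds)⁻¹ ^ 2 := by
    field_simp; ring
  have hW := congrArg (PowerSeries.C (R := DessinField)) hw
  rw [hsum, hconst, div_eq_mul_inv, hdiff]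
  simp only [map_neg, map_mul, map_add, map_sub, map_pow, map_ofNat, map_one] at hW ⊢
  exact sq_eq_of_eq_mul_add_mul_add hW dessinG01_eq_mul_add_mul_add

end
end

section
/- In the field ℚ(s,a,b,z) of rational functions, set α = (a-b)², β = (a+b)², x(z) = s·(α·z² - β)/(z² - 1), and Y(z) = -(α-β)·z/(2s·(α·z² - β)). Then Y(z)² = 1/(4s²) - (a²+b²)/(2s·x(z)) + (a²-b²)²/(4·x(z)²). In other words, (x(z), Y(z)) is a rational parameterization of the dessin spectral curve y² = 1/(4s²) - (u+v)/(2sx) + (u-v)²/(4x²) with u = a², v = b². -/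
/-!
Clearing denominators turns the identity into a polynomial identity in `s, a, b, z`, so it holds
in any field of characteristic different from `2` as soon as `s` and `(a - b)² z² - (a + b)²` are
nonzero; the factor `z² - 1` only ever appears as a denominator of a denominator, so even its
vanishing is harmless. In `ℚ(s,a,b,z)` both elements are images of polynomials that do not vanish
at some rational point, hence nonzero.
-/

noncomputable section

/-- The field `ℚ(s,a,b,z)` of rational functions in four indeterminates over `ℚ`. -/
abbrev F4 : Type := FractionRing (MvPolynomial (Fin 4) ℚ)

def fs : F4 := algebraMap (MvPolynomial (Fin 4) ℚ) F4 (MvPolynomial.X 0)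
def fa : F4 := algebraMap (MvPolynomial (Fin 4) ℚ) F4 (MvPolynomial.X 1)
def fb : F4 := algebraMap (MvPolynomial (Fin 4) ℚ) F4 (MvPolynomial.X 2)
def fz : F4 := algebraMap (MvPolynomial (Fin 4) ℚ) F4 (MvPolynomial.X 3)

theorem dessin_spectral_curve_param_of_ne_zero {K : Type*} [Field K] [NeZero (2 : K)]
    {s a b z : K} (hs : s ≠ 0) (hq : (a - b) ^ 2 * z ^ 2 - (a + b) ^ 2 ≠ 0) :
    (-(((a - b) ^ 2 - (a + b) ^ 2) * z) / (2 * s * ((a - b) ^ 2 * z ^ 2 - (a + b) ^ 2))) ^ 2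
      = 1 / (4 * s ^ 2)
        - (a ^ 2 + b ^ 2) / (2 * s * (s * ((a - b) ^ 2 * z ^ 2 - (a + b) ^ 2) / (z ^ 2 - 1)))
        + (a ^ 2 - b ^ 2) ^ 2 /
            (4 * (s * ((a - b) ^ 2 * z ^ 2 - (a + b) ^ 2) / (z ^ 2 - 1)) ^ 2) := by
  have h4 : (4 : K) ≠ 0 := by
    rw [show (4 : K) = 2 ^ 2 by norm_num]
    exact pow_ne_zero 2 two_ne_zero
  field_simp
  ring

theorem MvPolynomial.algebraMap_ne_zero_of_eval_ne_zero {σ R K : Type*} [CommRing R]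
    [CommRing K] [Algebra (MvPolynomial σ R) K] [IsFractionRing (MvPolynomial σ R) K]
    {p : MvPolynomial σ R} (x : σ → R) (h : eval x p ≠ 0) :
    algebraMap (MvPolynomial σ R) K p ≠ 0 := by
  rw [Ne, IsFractionRing.to_map_eq_zero_iff]
  rintro rfl
  exact h (map_zero _)

open MvPolynomial in
theorem fs_ne_zero : fs ≠ 0 :=
  algebraMap_ne_zero_of_eval_ne_zero 1 (by simp)

open MvPolynomial in
theorem fa_sub_fb_sq_mul_fz_sq_sub_fa_add_fb_sq_ne_zero :
    (fa - fb) ^ 2 * fz ^ 2 - (fa + fb) ^ 2 ≠ 0 := by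
  have h := algebraMap_ne_zero_of_eval_ne_zero (K := F4)
    (p := ((X 1 - X 2) ^ 2 * X 3 ^ 2 - (X 1 + X 2) ^ 2 : MvPolynomial (Fin 4) ℚ))
    (Pi.single 1 1) (by simp)
  simpa [fa, fb, fz] using h

/-- `(x(z), Y(z))` with `x(z) = s(αz²-β)/(z²-1)` and `Y(z) = -(α-β)z/(2s(αz²-β))`,
`α = (a-b)²`, `β = (a+b)²`, is a rational parameterization of the dessin spectral curve
`y² = 1/(4s²) - (u+v)/(2sx) + (u-v)²/(4x²)` with `u = a²`, `v = b²`. -/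
theorem dessin_spectral_curve_parameterization :
    (-( ((fa - fb) ^ 2 - (fa + fb) ^ 2) * fz) /
        (2 * fs * ((fa - fb) ^ 2 * fz ^ 2 - (fa + fb) ^ 2))) ^ 2
      = 1 / (4 * fs ^ 2)
        - (fa ^ 2 + fb ^ 2) /
            (2 * fs * (fs * ((fa - fb) ^ 2 * fz ^ 2 - (fa + fb) ^ 2) / (fz ^ 2 - 1)))
        + (fa ^ 2 - fb ^ 2) ^ 2 /
            (4 * (fs * ((fa - fb) ^ 2 * fz ^ 2 - (fa + fb) ^ 2) / (fz ^ 2 - 1)) ^ 2) :=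
  dessin_spectral_curve_param_of_ne_zero fs_ne_zero
    fa_sub_fb_sq_mul_fz_sq_sub_fa_add_fb_sq_ne_zero

end
end
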